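/- arXiv:1705.09354 — 7 statements merged into one kernel-verified Lean document; each statement's English description precedes it below -/
import Mathlib

section
/- Let p : Fin n → ℕ with ∑ i, p i = m. The block-sum map κ_p : (∏_{i : Fin n} Equiv.Perm (Fin (p i))) → Equiv.Perm (Fin m), which lets the i-th factor act on the i-th block of Fin m via the order isomorphism of that block with Fin (p i) and fixes nothing else, is an injective group homomorphism whose image is exactly Stab(g_p). -/
/-- The cardinality of the fiber of `f` at `i`, i.e. `p_i(f) = |f⁻¹({i})|`. -/
def fiberCard {m n : ℕ} (f : Fin m → Fin n) (i : Fin n) : ℕ :=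
  (Finset.univ.filter fun x => f x = i).card

/-! A monotone map pulls lower sets back to lower sets, and a lower set of `Fin m` with `s`
elements is `{x | x < s}`; hence the fibre of `g` at `i` is the `i`-th block. Numbering each
fibre by its block gives `Fin m ≃ Σ i, Fin (p i)` turning `g` into `Sigma.fst`, and the
permutations of a sigma type preserving `Sigma.fst` are exactly the fibrewise ones. -/

open Equiv

section Fiberwise

variable {α ι : Type*} {β : ι → Type*} {f : α → ι}

def sigmaEquivOfFiberEquiv (E : ∀ i, β i ≃ {a // f a = i}) : (Σ i, β i) ≃ α :=
  (sigmaCongrRight E).trans (sigmaFiberEquiv f)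

@[simp]
theorem sigmaEquivOfFiberEquiv_mk (E : ∀ i, β i ≃ {a // f a = i}) (i : ι) (k : β i) :
    sigmaEquivOfFiberEquiv E ⟨i, k⟩ = E i k :=
  rfl

def fiberwisePermHom (E : ∀ i, β i ≃ {a // f a = i}) : (∀ i, Perm (β i)) →* Perm α :=
  (sigmaEquivOfFiberEquiv E).permCongrHom.toMonoidHom.comp (Perm.sigmaCongrRightHom β)

theorem fiberwisePermHom_apply (E : ∀ i, β i ≃ {a // f a = i}) (σ : ∀ i, Perm (β i))
    (i : ι) (k : β i) : fiberwisePermHom E σ (E i k) = E i (σ i k) := by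
  change (sigmaEquivOfFiberEquiv E).permCongr (Perm.sigmaCongrRight σ)
      (sigmaEquivOfFiberEquiv E ⟨i, k⟩) = sigmaEquivOfFiberEquiv E ⟨i, σ i k⟩
  rw [permCongr_apply, symm_apply_apply]
  rfl

theorem fiberwisePermHom_injective (E : ∀ i, β i ≃ {a // f a = i}) :
    Function.Injective (fiberwisePermHom E) := fun _ _ h =>
  Perm.sigmaCongrRightHom_injective ((permCongrHom _).injective h)

theorem range_fiberwisePermHom (E : ∀ i, β i ≃ {a // f a = i}) :
    Set.range (fiberwisePermHom E) = {τ : Perm α | f ∘ τ = f} := by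
  ext τ
  constructor
  · rintro ⟨σ, rfl⟩
    funext a
    obtain ⟨⟨i, k⟩, rfl⟩ := (sigmaEquivOfFiberEquiv E).surjective a
    simp only [sigmaEquivOfFiberEquiv_mk, Function.comp_apply, fiberwisePermHom_apply]
    rw [(E i _).prop, (E i k).prop]
  · intro hτ
    have hτ' (i : ι) (a : α) : f (τ a) = i ↔ f a = i := by rw [← congrFun hτ a]; rfl
    refine ⟨fun i => (E i).symm.permCongr (τ.subtypePerm (hτ' i)), ?_⟩
    ext a
    obtain ⟨⟨i, k⟩, rfl⟩ := (sigmaEquivOfFiberEquiv E).surjective a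
    simp [fiberwisePermHom_apply, permCongr_apply]

end Fiberwise

theorem Fin.lt_card_iff_mem_of_isLowerSet {m : ℕ} {S : Finset (Fin m)}
    (hS : IsLowerSet (S : Set (Fin m))) (x : Fin m) : (x : ℕ) < S.card ↔ x ∈ S := by
  constructor
  · intro h
    by_contra hx
    have := Finset.card_le_card fun y hy =>
      Finset.mem_Iio.2 <| lt_of_not_ge fun hxy => hx (hS hxy hy)
    rw [Fin.card_Iio] at this
    omega
  · intro hx
    have := Finset.card_le_card fun y hy => hS (Finset.mem_Iic.1 hy) hx
    rw [Fin.card_Iic] at this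
    omega

section Blocks

open Finset

variable {m n : ℕ} {g : Fin m → Fin n}

theorem card_filter_mem_eq_sum_fiberCard (g : Fin m → Fin n) (T : Finset (Fin n)) :
    #{x | g x ∈ T} = ∑ j ∈ T, fiberCard g j := by
  rw [card_eq_sum_card_fiberwise (f := g) (t := T) fun x hx => by simpa using hx]
  refine sum_congr rfl fun j hj => congrArg card ?_
  ext x
  simp only [mem_filter, mem_univ, true_and, and_iff_right_iff_imp]
  exact fun hx => hx ▸ hj

theorem sum_fiberCard_le (g : Fin m → Fin n) (T : Finset (Fin n)) :
    ∑ j ∈ T, fiberCard g j ≤ m := by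
  rw [← card_filter_mem_eq_sum_fiberCard]
  exact (card_filter_le _ _).trans_eq (card_fin m)

theorem lt_sum_fiberCard_iff (hg : Monotone g) {T : Finset (Fin n)}
    (hT : IsLowerSet (T : Set (Fin n))) (x : Fin m) :
    (x : ℕ) < ∑ j ∈ T, fiberCard g j ↔ g x ∈ T := by
  rw [← card_filter_mem_eq_sum_fiberCard, Fin.lt_card_iff_mem_of_isLowerSet, mem_filter,
    and_iff_right (mem_univ x)]
  intro a b hba hb
  simp only [coe_filter, mem_univ, true_and, Set.mem_ofPred_eq] at hb ⊢
  exact hT (hg hba) hb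

theorem sum_Iic_fiberCard (g : Fin m → Fin n) (i : Fin n) :
    ∑ j ∈ Iic i, fiberCard g j = ∑ j ∈ Iio i, fiberCard g j + fiberCard g i := by
  rw [Iic_eq_cons_Iio, sum_cons, add_comm]

theorem apply_eq_iff_mem_block (hg : Monotone g) (x : Fin m) (i : Fin n) :
    g x = i ↔
      ∑ j ∈ Iio i, fiberCard g j ≤ x ∧ (x : ℕ) < ∑ j ∈ Iio i, fiberCard g j + fiberCard g i := by
  have hlt := lt_sum_fiberCard_iff hg (T := Iio i) (by simpa using isLowerSet_Iio i) x
  have hle := lt_sum_fiberCard_iff hg (T := Iic i) (by simpa using isLowerSet_Iic i) x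
  rw [mem_Iio] at hlt
  rw [mem_Iic, sum_Iic_fiberCard] at hle
  rw [← not_lt, hlt, hle, le_antisymm_iff, not_lt, and_comm]

noncomputable def blockEquiv (hg : Monotone g) (i : Fin n) :
    Fin (fiberCard g i) ≃ {x // g x = i} :=
  Equiv.ofBijective
    (fun k =>
      have hk : ∑ j ∈ Iio i, fiberCard g j + k < ∑ j ∈ Iio i, fiberCard g j + fiberCard g i := by
        omega
      have hm : ∑ j ∈ Iio i, fiberCard g j + k < m :=
        hk.trans_le ((sum_Iic_fiberCard g i).symm.trans_le (sum_fiberCard_le g _))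
      ⟨⟨_, hm⟩, (apply_eq_iff_mem_block hg _ i).2 ⟨Nat.le_add_right _ _, hk⟩⟩)
    ((Fintype.bijective_iff_injective_and_card _).2
      ⟨fun k l hkl => Fin.ext <| by simpa using congrArg (fun x : {x // g x = i} => (x : ℕ)) hkl,
        by rw [Fintype.card_fin, Fintype.card_subtype]; rfl⟩)

theorem blockEquiv_apply_coe (hg : Monotone g) (i : Fin n) (k : Fin (fiberCard g i)) :
    ((blockEquiv hg i k : Fin m) : ℕ) = ∑ j ∈ Iio i, fiberCard g j + k :=
  rfl

end Blocks

theorem stmt_5_general (n m : ℕ) (p : Fin n → ℕ)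
    (g : Fin m → Fin n) (hg : Monotone g) (hfib : ∀ i, fiberCard g i = p i) :
    ∃ κ : (∀ i, Equiv.Perm (Fin (p i))) →* Equiv.Perm (Fin m),
      (∀ (β : ∀ i, Equiv.Perm (Fin (p i))) (i : Fin n) (k : Fin (p i)) (x : Fin m),
          (x : ℕ) = (∑ j ∈ Finset.univ.filter fun j => j < i, p j) + (k : ℕ) →
          ((κ β x : ℕ) = (∑ j ∈ Finset.univ.filter fun j => j < i, p j) + (β i k : ℕ))) ∧
      Function.Injective κ ∧
      Set.range ⇑κ = {τ : Equiv.Perm (Fin m) | g ∘ ⇑τ = g} := by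
  obtain rfl : (fun i => fiberCard g i) = p := funext hfib
  refine ⟨fiberwisePermHom (blockEquiv hg), fun β i k x hx => ?_,
    fiberwisePermHom_injective _, range_fiberwisePermHom _⟩
  rw [Finset.filter_gt_eq_Iio] at hx ⊢
  obtain rfl : x = blockEquiv hg i k := Fin.ext hx
  rw [fiberwisePermHom_apply, blockEquiv_apply_coe]

/-- Let `p : Fin n → ℕ` with `∑ i, p i = m`, and let `g` be the unique monotone function
`Fin m → Fin n` whose fiber at `i` has cardinality `p i` (so the `i`-th block of `Fin m` is
the interval `∑_{j<i} p j ≤ x < ∑_{j≤i} p j`).  There is a block-sum group homomorphism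
`κ_p : (∏_{i : Fin n} Equiv.Perm (Fin (p i))) →* Equiv.Perm (Fin m)` which lets the `i`-th
factor act on the `i`-th block of `Fin m` via the order isomorphism of that block with
`Fin (p i)` (sending the element of the `i`-th block at offset `k` to the element at offset
`β i k`) and fixes nothing else; it is injective and its image is exactly `Stab(g_p)`. -/
theorem stmt_5 (n m : ℕ) (p : Fin n → ℕ) (hp : ∑ i, p i = m)
    (g : Fin m → Fin n) (hg : Monotone g) (hfib : ∀ i, fiberCard g i = p i) :
    ∃ κ : (∀ i, Equiv.Perm (Fin (p i))) →* Equiv.Perm (Fin m),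
      (∀ (β : ∀ i, Equiv.Perm (Fin (p i))) (i : Fin n) (k : Fin (p i)) (x : Fin m),
          (x : ℕ) = (∑ j ∈ Finset.univ.filter fun j => j < i, p j) + (k : ℕ) →
          ((κ β x : ℕ) = (∑ j ∈ Finset.univ.filter fun j => j < i, p j) + (β i k : ℕ))) ∧
      Function.Injective κ ∧
      Set.range ⇑κ = {τ : Equiv.Perm (Fin m) | g ∘ ⇑τ = g} :=
  stmt_5_general n m p g hg hfib
end

section
/- For every monotone function f : Fin m → Fin n and every permutation s of Fin n, there exists a unique pair (f', s') consisting of a monotone function f' : Fin m → Fin n and a permutation s' of Fin m that is increasing on the fibers of f, such that s ∘ f = f' ∘ s'; moreover p_i(f') = p_{s⁻¹(i)}(f) for every i : Fin n. -/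
/-- A permutation `σ` of `Fin m` is increasing on the fibers of `f : Fin m → Fin n` if for all
`x, y : Fin m` with `f x = f y` and `x < y` one has `σ x < σ y`. -/
def IncreasingOnFibers {m n : ℕ} (σ : Equiv.Perm (Fin m)) (f : Fin m → Fin n) : Prop :=
  ∀ x y : Fin m, f x = f y → x < y → σ x < σ y

lemma inv_eq_sort_iff {m n : ℕ} (f : Fin m → Fin n) (s : Equiv.Perm (Fin n))
    (f' : Fin m → Fin n) (s' : Equiv.Perm (Fin m)) (h1 : Monotone f')
    (h2 : IncreasingOnFibers s' f) (h3 : ⇑s ∘ f = f' ∘ ⇑s') :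
    s'⁻¹ = Tuple.sort (⇑s ∘ f) := by
  rw [Tuple.eq_sort_iff]
  constructor
  · have : (⇑s ∘ f) ∘ ⇑s'⁻¹ = f' := by
      rw [h3]; ext x; simp
    rw [this]; exact h1
  · intro i j hij hfij
    have hf : f (s'⁻¹ i) = f (s'⁻¹ j) := s.injective hfij
    rcases lt_trichotomy (s'⁻¹ i) (s'⁻¹ j) with h | h | h
    · exact h
    · exact absurd (s'⁻¹.injective h) hij.ne
    · exfalso
      have := h2 _ _ hf.symm h
      simp at this
      omega

/-- For every monotone function `f : Fin m → Fin n` and every permutation `s` of `Fin n`, there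
exists a unique pair `(f', s')` consisting of a monotone function `f' : Fin m → Fin n` and a
permutation `s'` of `Fin m` that is increasing on the fibers of `f`, such that
`s ∘ f = f' ∘ s'`; moreover `p_i(f') = p_{s⁻¹(i)}(f)` for every `i : Fin n`. -/
theorem stmt_6 (m n : ℕ) (f : Fin m → Fin n) (hf : Monotone f) (s : Equiv.Perm (Fin n)) :
    (∃! q : (Fin m → Fin n) × Equiv.Perm (Fin m),
        Monotone q.1 ∧ IncreasingOnFibers q.2 f ∧ ⇑s ∘ f = q.1 ∘ ⇑q.2) ∧
    ∀ (f' : Fin m → Fin n) (s' : Equiv.Perm (Fin m)),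
      Monotone f' → IncreasingOnFibers s' f → ⇑s ∘ f = f' ∘ ⇑s' →
      ∀ i, fiberCard f' i = fiberCard f (s⁻¹ i) := by
  constructor
  · set g := ⇑s ∘ f with hg
    set σ := Tuple.sort g with hσ
    refine ⟨⟨g ∘ ⇑σ, σ⁻¹⟩, ⟨Tuple.monotone_sort g, ?_, ?_⟩, ?_⟩
    · -- increasing on fibers
      intro x y hxy hlt
      have hchar := (Tuple.eq_sort_iff (f := g) (σ := σ)).mp rfl
      rcases lt_trichotomy (σ⁻¹ x) (σ⁻¹ y) with h | h | h
      · exact h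
      · exact absurd (σ⁻¹.injective h ▸ hlt) (lt_irrefl _)
      · exfalso
        have := hchar.2 _ _ h (by simp [hg]; rw [hxy])
        simp at this
        omega
    · ext x; simp
    · rintro ⟨f', s'⟩ ⟨h1, h2, h3⟩
      have he : s'⁻¹ = σ := inv_eq_sort_iff f s f' s' h1 h2 h3
      have hs' : s' = σ⁻¹ := by rw [← he]; simp
      have hf' : f' = g ∘ ⇑σ := by
        rw [h3, hs']; ext x; simp
      exact Prod.ext hf' hs'
  · intro f' s' h1 h2 h3 i
    have hf' : ∀ x, f' (s' x) = s (f x) := fun x => (congrFun h3 x).symm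
    unfold fiberCard
    apply Finset.card_bij (fun x _ => s'⁻¹ x)
    · intro a ha
      simp only [Finset.mem_filter, Finset.mem_univ, true_and] at ha ⊢
      have := hf' (s'⁻¹ a)
      simp [ha] at this
      rw [this]; simp
    · intro a _ b _ hab; exact s'⁻¹.injective hab
    · intro b hb
      refine ⟨s' b, ?_, by simp⟩
      simp only [Finset.mem_filter, Finset.mem_univ, true_and] at hb ⊢
      rw [hf', hb]; simp
end

section
/- For every monotone function f : Fin m → Fin n and all permutations s, t of Fin n, the distributive-law data satisfy f_{t ∘ s} = (f_s)_t and (t ∘ s)^f = t^{f_s} ∘ s^f; moreover for the identity permutation, f_{id} = f and id^f = id. -/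
open Function Equiv

lemma apply_eq_apply_iff_of_comp_eq {α β γ δ : Type*} {f : α → β} {g : β → γ} {f' : δ → γ}
    {σ : α → δ} (hg : Injective g) (h : g ∘ f = f' ∘ σ) (x y : α) :
    f' (σ x) = f' (σ y) ↔ f x = f y := by
  rw [← comp_apply (f := f'), ← comp_apply (f := f') (x := y), ← h, comp_apply, comp_apply,
    hg.eq_iff]

namespace IncreasingOnFibers

variable {m n k : ℕ} {σ τ : Perm (Fin m)} {f : Fin m → Fin n}

lemma lt_iff (hσ : IncreasingOnFibers σ f) {x y : Fin m} (hxy : f x = f y) :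
    σ x < σ y ↔ x < y := by
  refine ⟨fun h => ?_, hσ x y hxy⟩
  by_contra! hyx
  rcases hyx.eq_or_lt with rfl | hlt
  · exact h.false
  · exact (hσ y x hxy.symm hlt).asymm h

lemma one : IncreasingOnFibers 1 f := fun _ _ _ => id

lemma mul {g : Fin m → Fin k} (hτ : IncreasingOnFibers τ g) (hσ : IncreasingOnFibers σ f)
    (hfib : ∀ x y, f x = f y → g (σ x) = g (σ y)) : IncreasingOnFibers (τ * σ) f :=
  fun x y hxy hlt => hτ _ _ (hfib x y hxy) (hσ x y hxy hlt)

lemma inv {g : Fin m → Fin k} (hσ : IncreasingOnFibers σ f)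
    (hfib : ∀ x y, g (σ x) = g (σ y) → f x = f y) : IncreasingOnFibers σ⁻¹ g := by
  intro x y hxy hlt
  have hf : f (σ⁻¹ x) = f (σ⁻¹ y) := hfib _ _ (by simpa using hxy)
  rw [← hσ.lt_iff hf]
  simpa using hlt

/-- On each fiber `τ` restricts to a strictly monotone self-map of a finite linear order. -/
lemma eq_one (hτ : IncreasingOnFibers τ f) (hfib : f ∘ τ = f) : τ = 1 := by
  ext x
  let τx : {y // f y = f x} → {y // f y = f x} :=
    fun y => ⟨τ y, (congrFun hfib y).trans y.2⟩
  have hmono : StrictMono τx := fun a b hab => hτ a b (a.2.trans b.2.symm) hab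
  exact congrArg (fun y : {y // f y = f x} => (y : ℕ)) (hmono.apply_eq (x := ⟨x, rfl⟩))

end IncreasingOnFibers

theorem distribLaw_unique {m n k : ℕ} {f : Fin m → Fin n} {g : Fin n → Fin k}
    (hg : Injective g) {f₁ f₂ : Fin m → Fin k} {σ₁ σ₂ : Perm (Fin m)}
    (hf₁ : Monotone f₁) (hf₂ : Monotone f₂)
    (hσ₁ : IncreasingOnFibers σ₁ f) (hσ₂ : IncreasingOnFibers σ₂ f)
    (e₁ : g ∘ f = f₁ ∘ σ₁) (e₂ : g ∘ f = f₂ ∘ σ₂) : f₁ = f₂ ∧ σ₁ = σ₂ := by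
  have hcomp : f₂ ∘ ⇑(σ₂ * σ₁⁻¹) = f₁ := by
    funext x
    simpa using (congrFun (e₁.symm.trans e₂) (σ₁⁻¹ x)).symm
  have hf : f₁ = f₂ := by
    have := Tuple.unique_monotone (σ := σ₂ * σ₁⁻¹) (τ := 1) (hcomp ▸ hf₁) hf₂
    rwa [hcomp, Perm.coe_one, comp_id] at this
  subst hf
  have hfib := apply_eq_apply_iff_of_comp_eq hg e₁
  have hτ : IncreasingOnFibers (σ₂ * σ₁⁻¹) f₁ :=
    hσ₂.mul (hσ₁.inv fun x y => (hfib x y).1) fun x y hxy => by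
      rw [← hfib]
      simpa using hxy
  exact ⟨rfl, (mul_inv_eq_one.1 (hτ.eq_one hcomp)).symm⟩

theorem stmt_7_general (m n : ℕ) (f : Fin m → Fin n) (hf : Monotone f)
    (s t : Equiv.Perm (Fin n))
    (fs : Fin m → Fin n) (sf : Equiv.Perm (Fin m))
    (hsf : IncreasingOnFibers sf f) (heq1 : ⇑s ∘ f = fs ∘ ⇑sf)
    (fst : Fin m → Fin n) (tfs : Equiv.Perm (Fin m))
    (hfst : Monotone fst) (htfs : IncreasingOnFibers tfs fs) (heq2 : ⇑t ∘ fs = fst ∘ ⇑tfs)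
    (fts : Fin m → Fin n) (tsf : Equiv.Perm (Fin m))
    (hfts : Monotone fts) (htsf : IncreasingOnFibers tsf f)
    (heq3 : ⇑(t * s) ∘ f = fts ∘ ⇑tsf) :
    (fts = fst ∧ tsf = tfs * sf) ∧
    ∀ (f₁ : Fin m → Fin n) (s₁ : Equiv.Perm (Fin m)),
      Monotone f₁ → IncreasingOnFibers s₁ f → ⇑(1 : Equiv.Perm (Fin n)) ∘ f = f₁ ∘ ⇑s₁ →
      f₁ = f ∧ s₁ = 1 := by
  have hcomp : ⇑(t * s) ∘ f = fst ∘ ⇑(tfs * sf) := by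
    rw [Perm.coe_mul, Perm.coe_mul, comp_assoc, heq1, ← comp_assoc, heq2, comp_assoc]
  have hinc : IncreasingOnFibers (tfs * sf) f :=
    htfs.mul hsf fun x y => (apply_eq_apply_iff_of_comp_eq s.injective heq1 x y).2
  refine ⟨distribLaw_unique (t * s).injective hfts hfst htsf hinc heq3 hcomp, ?_⟩
  intro f₁ s₁ hf₁ hs₁ he
  exact distribLaw_unique (1 : Perm (Fin n)).injective hf₁ hf hs₁ .one he rfl

/-- For every monotone function `f : Fin m → Fin n` and all permutations `s, t` of `Fin n`, the
distributive-law data satisfy `f_{t ∘ s} = (f_s)_t` and `(t ∘ s)^f = t^{f_s} ∘ s^f`; moreover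
for the identity permutation, `f_id = f` and `id^f = id`.  Here, for a monotone `f` and a
permutation `s`, `(f_s, s^f)` denotes the unique pair of a monotone function `f_s` and a
permutation `s^f` of `Fin m` increasing on the fibers of `f` with `s ∘ f = f_s ∘ s^f`; the
hypotheses below exhibit such pairs `(fs, sf)` for `(f, s)`, `(fst, tfs)` for `(fs, t)` and
`(fts, tsf)` for `(f, t * s)`. -/
theorem stmt_7 (m n : ℕ) (f : Fin m → Fin n) (hf : Monotone f)
    (s t : Equiv.Perm (Fin n))
    (fs : Fin m → Fin n) (sf : Equiv.Perm (Fin m))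
    (hfs : Monotone fs) (hsf : IncreasingOnFibers sf f) (heq1 : ⇑s ∘ f = fs ∘ ⇑sf)
    (fst : Fin m → Fin n) (tfs : Equiv.Perm (Fin m))
    (hfst : Monotone fst) (htfs : IncreasingOnFibers tfs fs) (heq2 : ⇑t ∘ fs = fst ∘ ⇑tfs)
    (fts : Fin m → Fin n) (tsf : Equiv.Perm (Fin m))
    (hfts : Monotone fts) (htsf : IncreasingOnFibers tsf f)
    (heq3 : ⇑(t * s) ∘ f = fts ∘ ⇑tsf) :
    (fts = fst ∧ tsf = tfs * sf) ∧
    ∀ (f₁ : Fin m → Fin n) (s₁ : Equiv.Perm (Fin m)),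
      Monotone f₁ → IncreasingOnFibers s₁ f → ⇑(1 : Equiv.Perm (Fin n)) ∘ f = f₁ ∘ ⇑s₁ →
      f₁ = f ∧ s₁ = 1 :=
  stmt_7_general m n f hf s t fs sf hsf heq1 fst tfs hfst htfs heq2 fts tsf hfts htsf heq3
end

section
/- For all monotone functions f : Fin m → Fin n and g : Fin n → Fin o and every permutation s of Fin o, the distributive-law data satisfy (g ∘ f)_s = g_s ∘ f_{s^g} and s^{g ∘ f} = (s^g)^f; moreover for the identity monotone function id : Fin n → Fin n one has id_s = id and s^{id} = s. -/
/-!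
Both identities are instances of the uniqueness half of the distributive law: a map
`F : Fin m → Fin o` has at most one factorisation `F = h ∘ σ` with `h` monotone and `σ` increasing
on the fibers of `F`. The monotone part is determined by the cardinalities of the sublevel sets
`{x | h x ≤ v}`, which `σ` does not change; on each fiber, `σ` is then the unique strictly
monotone enumeration of the corresponding fiber of `h`. For the composite, `(s ∘ g) ∘ f`
factors as `(g_s ∘ f_{s^g}) ∘ (s^g)^f`, and `(s^g)^f` is increasing on the fibers of `g ∘ f`.
-/

open Finset Function

namespace IncreasingOnFibers

variable {m n o : ℕ} {σ : Equiv.Perm (Fin m)}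

lemma of_injective {F : Fin m → Fin n} (hF : Injective F) : IncreasingOnFibers σ F :=
  fun _ _ hxy hlt => absurd (hF hxy) hlt.ne

lemma comp_injective {f : Fin m → Fin n} {e : Fin n → Fin o} (he : Injective e)
    (hσ : IncreasingOnFibers σ f) : IncreasingOnFibers σ (e ∘ f) :=
  fun x y hxy => hσ x y (he hxy)

lemma comp {f : Fin m → Fin n} {g : Fin n → Fin o} {τ : Equiv.Perm (Fin n)}
    {f' : Fin m → Fin n} (hσ : IncreasingOnFibers σ f) (hf : Monotone f)
    (hτ : IncreasingOnFibers τ g) (hf' : Monotone f') (heq : ⇑τ ∘ f = f' ∘ ⇑σ) :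
    IncreasingOnFibers σ (g ∘ f) := by
  intro x y hxy hlt
  rcases (hf hlt.le).eq_or_lt with hfeq | hflt
  · exact hσ x y hfeq hlt
  · have hτf : (τ ∘ f) x < (τ ∘ f) y := hτ _ _ hxy hflt
    rw [heq] at hτf
    exact hf'.reflect_lt hτf

end IncreasingOnFibers

section Factorisation

variable {m o : ℕ}

lemma Monotone.le_iff_lt_card_filter_le {β : Type*} [LinearOrder β] {h : Fin m → β}
    (hh : Monotone h) (v : β) (x : Fin m) : h x ≤ v ↔ (x : ℕ) < #{y | h y ≤ v} := by
  constructor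
  · intro hx
    have hsub : Iic x ⊆ ({y | h y ≤ v} : Finset (Fin m)) := fun y hy => by
      simpa using (hh (mem_Iic.mp hy)).trans hx
    have hcard := card_le_card hsub
    rw [Fin.card_Iic] at hcard
    omega
  · intro hx
    by_contra! hvx
    have hsub : ({y | h y ≤ v} : Finset (Fin m)) ⊆ Iio x := fun y hy => by
      simp only [mem_filter, mem_univ, true_and] at hy
      exact mem_Iio.mpr (lt_of_not_ge fun hxy => (hh hxy).not_gt (hy.trans_lt hvx))
    have hcard := card_le_card hsub
    rw [Fin.card_Iio] at hcard
    omega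

lemma card_filter_comp_perm {β : Type*} [LinearOrder β] (h : Fin m → β) (σ : Equiv.Perm (Fin m))
    (v : β) : #{y | (h ∘ σ) y ≤ v} = #{y | h y ≤ v} :=
  card_equiv σ (by simp)

lemma Monotone.eq_of_comp_perm_eq {β : Type*} [LinearOrder β] {h₁ h₂ : Fin m → β}
    {σ₁ σ₂ : Equiv.Perm (Fin m)} (hh₁ : Monotone h₁) (hh₂ : Monotone h₂)
    (heq : h₁ ∘ σ₁ = h₂ ∘ σ₂) : h₁ = h₂ := by
  funext x
  refine eq_of_forall_ge_iff fun v => ?_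
  rw [hh₁.le_iff_lt_card_filter_le, hh₂.le_iff_lt_card_filter_le, ← card_filter_comp_perm h₁ σ₁,
    ← card_filter_comp_perm h₂ σ₂, heq]

lemma IncreasingOnFibers.perm_eq {F : Fin m → Fin o} {h : Fin m → Fin o}
    {σ₁ σ₂ : Equiv.Perm (Fin m)} (hσ₁ : IncreasingOnFibers σ₁ F) (hσ₂ : IncreasingOnFibers σ₂ F)
    (e₁ : F = h ∘ σ₁) (e₂ : F = h ∘ σ₂) : σ₁ = σ₂ := by
  ext x
  let S := {y : Fin m // F y = F x}
  have strictMono_restrict : ∀ σ : Equiv.Perm (Fin m), IncreasingOnFibers σ F →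
      StrictMono fun y : S => σ y :=
    fun σ hσ a b hab => hσ a b (a.2.trans b.2.symm) hab
  have range_restrict : ∀ σ : Equiv.Perm (Fin m), F = h ∘ σ →
      Set.range (fun y : S => σ y) = {z | h z = F x} := by
    intro σ e
    ext z
    constructor
    · rintro ⟨⟨y, hy⟩, rfl⟩
      simpa [e] using hy
    · intro hz
      exact ⟨⟨σ.symm z, by simpa [e] using hz⟩, σ.apply_symm_apply z⟩
  have restrict_eq := ((strictMono_restrict σ₁ hσ₁).range_inj (strictMono_restrict σ₂ hσ₂)).mp
    ((range_restrict σ₁ e₁).trans (range_restrict σ₂ e₂).symm)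
  exact congrArg Fin.val (congrFun restrict_eq ⟨x, rfl⟩)

theorem eq_of_monotone_comp_increasingOnFibers {F h₁ h₂ : Fin m → Fin o}
    {σ₁ σ₂ : Equiv.Perm (Fin m)} (hh₁ : Monotone h₁) (hh₂ : Monotone h₂)
    (hσ₁ : IncreasingOnFibers σ₁ F) (hσ₂ : IncreasingOnFibers σ₂ F)
    (e₁ : F = h₁ ∘ σ₁) (e₂ : F = h₂ ∘ σ₂) : h₁ = h₂ ∧ σ₁ = σ₂ := by
  obtain rfl : h₁ = h₂ := hh₁.eq_of_comp_perm_eq hh₂ (e₁.symm.trans e₂)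
  exact ⟨rfl, hσ₁.perm_eq hσ₂ e₁ e₂⟩

end Factorisation

theorem stmt_8_general (m n o : ℕ) (f : Fin m → Fin n) (hf : Monotone f)
    (g : Fin n → Fin o) (s : Equiv.Perm (Fin o))
    (gs : Fin n → Fin o) (sg : Equiv.Perm (Fin n))
    (hgs : Monotone gs) (hsg : IncreasingOnFibers sg g) (heq1 : ⇑s ∘ g = gs ∘ ⇑sg)
    (fsg : Fin m → Fin n) (sgf : Equiv.Perm (Fin m))
    (hfsg : Monotone fsg) (hsgf : IncreasingOnFibers sgf f) (heq2 : ⇑sg ∘ f = fsg ∘ ⇑sgf)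
    (gfs : Fin m → Fin o) (sgf' : Equiv.Perm (Fin m))
    (hgfs : Monotone gfs) (hsgf' : IncreasingOnFibers sgf' (g ∘ f))
    (heq3 : ⇑s ∘ (g ∘ f) = gfs ∘ ⇑sgf') :
    (gfs = gs ∘ fsg ∧ sgf' = sgf) ∧
    ∀ (s' : Equiv.Perm (Fin n)) (h₁ : Fin n → Fin n) (σ₁ : Equiv.Perm (Fin n)),
      Monotone h₁ → IncreasingOnFibers σ₁ (id : Fin n → Fin n) → ⇑s' ∘ id = h₁ ∘ ⇑σ₁ →
      h₁ = id ∧ σ₁ = s' := by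
  refine ⟨?_, fun s' h₁ σ₁ hh₁ _ heq => ?_⟩
  · have hsgf_comp : IncreasingOnFibers sgf (g ∘ f) := hsgf.comp hf hsg hfsg heq2
    have heq : ⇑s ∘ (g ∘ f) = (gs ∘ fsg) ∘ ⇑sgf := by
      rw [← comp_assoc, heq1, comp_assoc, heq2, comp_assoc]
    exact eq_of_monotone_comp_increasingOnFibers hgfs (hgs.comp hfsg)
      (hsgf'.comp_injective s.injective) (hsgf_comp.comp_injective s.injective) heq3 heq
  · exact eq_of_monotone_comp_increasingOnFibers hh₁ monotone_id
      (.of_injective s'.injective) (.of_injective s'.injective) heq rfl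

/-- For all monotone functions `f : Fin m → Fin n` and `g : Fin n → Fin o` and every permutation
`s` of `Fin o`, the distributive-law data satisfy `(g ∘ f)_s = g_s ∘ f_{s^g}` and
`s^{g ∘ f} = (s^g)^f`; moreover for the identity monotone function `id : Fin n → Fin n` one has
`id_s = id` and `s^{id} = s`.  Here, for a monotone `f` and a permutation `s`, `(f_s, s^f)`
denotes the unique pair of a monotone function `f_s` and a permutation `s^f` increasing on the
fibers of `f` with `s ∘ f = f_s ∘ s^f`; the hypotheses below exhibit such pairs `(gs, sg)` for
`(g, s)`, `(fsg, sgf)` for `(f, s^g = sg)` and `(gfs, sgf')` for `(g ∘ f, s)`. -/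
theorem stmt_8 (m n o : ℕ) (f : Fin m → Fin n) (hf : Monotone f)
    (g : Fin n → Fin o) (hg : Monotone g) (s : Equiv.Perm (Fin o))
    (gs : Fin n → Fin o) (sg : Equiv.Perm (Fin n))
    (hgs : Monotone gs) (hsg : IncreasingOnFibers sg g) (heq1 : ⇑s ∘ g = gs ∘ ⇑sg)
    (fsg : Fin m → Fin n) (sgf : Equiv.Perm (Fin m))
    (hfsg : Monotone fsg) (hsgf : IncreasingOnFibers sgf f) (heq2 : ⇑sg ∘ f = fsg ∘ ⇑sgf)
    (gfs : Fin m → Fin o) (sgf' : Equiv.Perm (Fin m))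
    (hgfs : Monotone gfs) (hsgf' : IncreasingOnFibers sgf' (g ∘ f))
    (heq3 : ⇑s ∘ (g ∘ f) = gfs ∘ ⇑sgf') :
    (gfs = gs ∘ fsg ∧ sgf' = sgf) ∧
    ∀ (s' : Equiv.Perm (Fin n)) (h₁ : Fin n → Fin n) (σ₁ : Equiv.Perm (Fin n)),
      Monotone h₁ → IncreasingOnFibers σ₁ (id : Fin n → Fin n) → ⇑s' ∘ id = h₁ ∘ ⇑σ₁ →
      h₁ = id ∧ σ₁ = s' :=
  stmt_8_general m n o f hf g s gs sg hgs hsg heq1 fsg sgf hfsg hsgf heq2 gfs sgf' hgfs hsgf' heq3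
end

section
/- For all natural numbers m, n, the assignment sending a pair (g, C) — where g : Fin m → Fin n is monotone and C is a coset Stab(g) · σ₀ of Stab(g) in Equiv.Perm (Fin m) — to the function g ∘ σ₀ is independent of the representative σ₀ ∈ C, and it defines a bijection from the set of such pairs onto the set of all functions Fin m → Fin n. -/
/-- The assignment sending a pair `(g, C)` — where `g : Fin m → Fin n` is monotone and `C` is a
coset `Stab(g) · σ₀` of `Stab(g) = {τ | g ∘ τ = g}` in `Equiv.Perm (Fin m)` — to the function
`g ∘ σ₀` is independent of the representative `σ₀ ∈ C`, and it defines a bijection from the set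
of such pairs onto the set of all functions `Fin m → Fin n`: every function `f` arises from
exactly one pair `(g, C)`. -/
theorem stmt_9 (m n : ℕ) :
    (∀ g : Fin m → Fin n, Monotone g →
        ∀ (σ₀ τ : Equiv.Perm (Fin m)), g ∘ ⇑τ = g → g ∘ ⇑(τ * σ₀) = g ∘ ⇑σ₀) ∧
    ∀ f : Fin m → Fin n,
      ∃! gC : {g : Fin m → Fin n // Monotone g} × Set (Equiv.Perm (Fin m)),
        (∃ σ₀ : Equiv.Perm (Fin m),
            gC.2 = {σ | ∃ τ : Equiv.Perm (Fin m), gC.1.1 ∘ ⇑τ = gC.1.1 ∧ σ = τ * σ₀}) ∧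
        ∀ σ₀ ∈ gC.2, gC.1.1 ∘ ⇑σ₀ = f := by
  constructor
  · intro g _ σ₀ τ hτ
    have : g ∘ ⇑(τ * σ₀) = (g ∘ ⇑τ) ∘ ⇑σ₀ := rfl
    rw [this, hτ]
  · intro f
    set s := Tuple.sort f with hs
    have hmono : Monotone (f ∘ ⇑s) := Tuple.monotone_sort f
    refine ⟨⟨⟨f ∘ ⇑s, hmono⟩,
      {σ | ∃ τ : Equiv.Perm (Fin m), (f ∘ ⇑s) ∘ ⇑τ = f ∘ ⇑s ∧ σ = τ * s⁻¹}⟩, ?_, ?_⟩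
    · refine ⟨⟨s⁻¹, rfl⟩, ?_⟩
      rintro σ ⟨τ, hτ, rfl⟩
      have : (f ∘ ⇑s) ∘ ⇑(τ * s⁻¹) = ((f ∘ ⇑s) ∘ ⇑τ) ∘ ⇑s⁻¹ := rfl
      rw [this, hτ]
      ext x
      simp
    · rintro ⟨⟨g, hg⟩, C⟩ ⟨⟨σ₀, hCdef⟩, hC⟩
      simp only at hCdef hC
      subst hCdef
      have hgf : g ∘ ⇑σ₀ = f := hC σ₀ ⟨1, by ext x; simp, by simp⟩
      -- g = f ∘ σ₀⁻¹, monotone; so g = f ∘ s by uniqueness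
      have hg' : g = f ∘ ⇑σ₀⁻¹ := by
        rw [← hgf]; ext x; simp
      have hkey : f ∘ ⇑σ₀⁻¹ = f ∘ ⇑s :=
        Tuple.unique_monotone (hg' ▸ hg) hmono
      have hge : g = f ∘ ⇑s := hg'.trans hkey
      subst hge
      have hstab : (f ∘ ⇑s) ∘ ⇑(σ₀ * s) = f ∘ ⇑s := by
        have : (f ∘ ⇑s) ∘ ⇑(σ₀ * s) = ((f ∘ ⇑s) ∘ ⇑σ₀) ∘ ⇑s := rfl
        rw [this, hgf]
      have hstab' : (f ∘ ⇑s) ∘ ⇑(σ₀ * s)⁻¹ = f ∘ ⇑s := by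
        have h := congrArg (fun k => k ∘ ⇑(σ₀ * s)⁻¹) hstab
        rw [← h]; ext x; simp
      refine Prod.ext rfl ?_
      simp only
      ext σ
      constructor
      · rintro ⟨τ, hτ, rfl⟩
        refine ⟨τ * (σ₀ * s), ?_, by group⟩
        have : (f ∘ ⇑s) ∘ ⇑(τ * (σ₀ * s)) = ((f ∘ ⇑s) ∘ ⇑τ) ∘ ⇑(σ₀ * s) := rfl
        rw [this, hτ, hstab]
      · rintro ⟨τ, hτ, rfl⟩
        refine ⟨τ * (σ₀ * s)⁻¹, ?_, by group⟩
        have : (f ∘ ⇑s) ∘ ⇑(τ * (σ₀ * s)⁻¹) = ((f ∘ ⇑s) ∘ ⇑τ) ∘ ⇑(σ₀ * s)⁻¹ := rfl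
        rw [this, hτ, hstab']
end

section
/- Let p : Fin n → ℕ with ∑ i, p i = m. There is a group homomorphism ι_p : (∏_{i : Fin n} B_{p i}) → B_m sending the k-th Artin generator of the i-th factor to the (∑_{j<i} p j + k)-th Artin generator of B_m. Moreover, for every β in the product, the underlying permutation q(ι_p(β)) lies in Stab(g_p) (it preserves each block of Fin m setwise); in particular ι_p maps ∏_{i} PB_{p i} into the pure braid group PB_m. -/
/-- The Artin relations of the braid group `B_n` on `n` strands, with generators
`σ_1, …, σ_{n-1}` indexed by `Fin (n-1)`. -/
def braidRels (n : ℕ) : Set (FreeGroup (Fin (n - 1))) :=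
  {r | (∃ i j : Fin (n - 1), (j : ℕ) = (i : ℕ) + 1 ∧
          r = .of i * .of j * .of i * (.of j * .of i * .of j)⁻¹) ∨
       (∃ i j : Fin (n - 1), ((i : ℕ) + 2 ≤ (j : ℕ) ∨ (j : ℕ) + 2 ≤ (i : ℕ)) ∧
          r = .of i * .of j * (.of j * .of i)⁻¹)}

/-- The braid group on `n` strands. -/
abbrev BraidGroup (n : ℕ) : Type := PresentedGroup (braidRels n)

/-- The `i`-th Artin generator `σ_{i+1}` of the braid group on `n` strands. -/
def braidGen (n : ℕ) (i : Fin (n - 1)) : BraidGroup n := PresentedGroup.of i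

/-- The transposition of `Fin n` exchanging the `i`-th and `(i+1)`-st elements. -/
def braidSwap (n : ℕ) (i : Fin (n - 1)) : Equiv.Perm (Fin n) :=
  Equiv.swap ⟨(i : ℕ), by have := i.isLt; omega⟩ ⟨(i : ℕ) + 1, by have := i.isLt; omega⟩

lemma Equiv.Perm.viaEmbedding_swap {α β : Type*} [DecidableEq α] [DecidableEq β]
    (e : α ↪ β) (a b : α) :
    (Equiv.swap a b).viaEmbedding e = Equiv.swap (e a) (e b) := by
  ext x
  by_cases hx : x ∈ Set.range e
  · obtain ⟨c, rfl⟩ := hx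
    rw [Equiv.Perm.viaEmbedding_apply]
    rcases eq_or_ne c a with rfl | ha
    · simp
    rcases eq_or_ne c b with rfl | hb
    · simp
    · rw [Equiv.swap_apply_of_ne_of_ne ha hb,
        Equiv.swap_apply_of_ne_of_ne (e.injective.ne ha) (e.injective.ne hb)]
  · rw [Equiv.Perm.viaEmbedding_apply_of_notMem _ _ _ hx,
      Equiv.swap_apply_of_ne_of_ne (fun h => hx ⟨a, h.symm⟩) (fun h => hx ⟨b, h.symm⟩)]

lemma Equiv.Perm.comp_viaEmbedding_eq_self {α β γ : Type*} {e : α ↪ β} {g : β → γ}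
    (hg : ∀ a a', g (e a) = g (e a')) (σ : Equiv.Perm α) :
    g ∘ σ.viaEmbedding e = g := by
  funext x
  by_cases hx : x ∈ Set.range e
  · obtain ⟨c, rfl⟩ := hx
    rw [Function.comp_apply, Equiv.Perm.viaEmbedding_apply, hg]
  · rw [Function.comp_apply, Equiv.Perm.viaEmbedding_apply_of_notMem _ _ _ hx]

/-- `Stab(g)` in the notation of the paper. -/
def Equiv.Perm.fiberStabilizer {α β : Type*} (g : α → β) : Subgroup (Equiv.Perm α) where
  carrier := {τ | g ∘ τ = g}
  one_mem' := rfl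
  mul_mem' {a b} ha hb := by
    change g ∘ a ∘ b = g
    rw [← Function.comp_assoc, ha, hb]
  inv_mem' {a} ha := by
    change g ∘ a.symm = g
    conv_lhs => rw [← ha]
    rw [Function.comp_assoc, Equiv.self_comp_symm, Function.comp_id]

lemma Equiv.Perm.mem_fiberStabilizer {α β : Type*} {g : α → β} {τ : Equiv.Perm α} :
    τ ∈ Equiv.Perm.fiberStabilizer g ↔ g ∘ τ = g :=
  Iff.rfl

lemma PresentedGroup.commute_of_forall_of {α G : Type*} [Group G] {rels : Set (FreeGroup α)}
    (f : PresentedGroup rels →* G) {z : G} (h : ∀ a, Commute (f (.of a)) z)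
    (x : PresentedGroup rels) : Commute (f x) z := by
  have hx := PresentedGroup.generated_by rels ((Subgroup.centralizer {z}).comap f)
    (fun a => Subgroup.mem_centralizer_singleton_iff.mpr (h a).eq) x
  exact Subgroup.mem_centralizer_singleton_iff.mp hx

lemma MonoidHom.noncommPiCoprod_mem {ι M : Type*} [Fintype ι] {N : ι → Type*}
    [∀ i, Monoid (N i)] [Monoid M] {φ : ∀ i, N i →* M}
    {hcomm : Pairwise fun i j => ∀ x y, Commute (φ i x) (φ j y)} {S : Submonoid M}
    {β : ∀ i, N i} (h : ∀ i, φ i (β i) ∈ S) :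
    MonoidHom.noncommPiCoprod φ hcomm β ∈ S :=
  S.noncommProd_mem _ _ (fun _ _ _ _ hij => hcomm hij _ _) fun i _ => h i

lemma Fin.mem_iff_val_lt_card_of_isLowerSet {m : ℕ} {S : Finset (Fin m)}
    (hS : IsLowerSet (S : Set (Fin m))) (x : Fin m) : x ∈ S ↔ (x : ℕ) < S.card := by
  constructor
  · intro hx
    have h := Finset.card_le_card fun y hy => hS (Finset.mem_Iic.mp hy) hx
    rw [Fin.card_Iic] at h
    omega
  · intro hx
    by_contra hxS
    have h := Finset.card_le_card fun y (hy : y ∈ S) =>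
      Finset.mem_Iio.mpr (lt_of_not_ge fun hxy => hxS (hS hxy hy))
    rw [Fin.card_Iio] at h
    omega

lemma mem_iff_val_lt_sum_fiberCard {m n : ℕ} {g : Fin m → Fin n} (hg : Monotone g)
    {s : Finset (Fin n)} (hs : IsLowerSet (s : Set (Fin n))) (x : Fin m) :
    g x ∈ s ↔ (x : ℕ) < ∑ j ∈ s, fiberCard g j := by
  have hlower :
      IsLowerSet ((Finset.univ.filter fun y => g y ∈ s : Finset (Fin m)) : Set (Fin m)) :=
    fun y z hzy hy => by simpa using hs (hg hzy) (by simpa using hy)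
  have hcard := Finset.sum_card_fiberwise_eq_card_filter Finset.univ s g
  simpa [fiberCard, hcard] using Fin.mem_iff_val_lt_card_of_isLowerSet hlower x

section BlockOffsets

variable {n : ℕ} (p : Fin n → ℕ)

def blockOffset (i : Fin n) : ℕ := ∑ j ∈ Finset.Iio i, p j

lemma blockOffset_add_self (i : Fin n) : blockOffset p i + p i = ∑ j ∈ Finset.Iic i, p j := by
  rw [blockOffset, ← Finset.Iio_insert, Finset.sum_insert Finset.notMem_Iio_self, add_comm]

lemma blockOffset_add_self_le_sum (i : Fin n) : blockOffset p i + p i ≤ ∑ j, p j := by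
  rw [blockOffset_add_self]
  exact Finset.sum_le_sum_of_subset (Finset.subset_univ _)

lemma blockOffset_add_self_le_of_lt {i j : Fin n} (h : i < j) :
    blockOffset p i + p i ≤ blockOffset p j := by
  rw [blockOffset_add_self]
  exact Finset.sum_le_sum_of_subset fun k hk =>
    Finset.mem_Iio.mpr ((Finset.mem_Iic.mp hk).trans_lt h)

lemma eq_of_blockOffset_le_of_lt {m : ℕ} {g : Fin m → Fin n} (hg : Monotone g)
    (hfib : ∀ i, fiberCard g i = p i) {i : Fin n} {x : Fin m}
    (h₁ : blockOffset p i ≤ x) (h₂ : x < blockOffset p i + p i) : g x = i := by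
  have hlt := mem_iff_val_lt_sum_fiberCard hg (s := Finset.Iio i)
    (by simpa using isLowerSet_Iio i) x
  have hle := mem_iff_val_lt_sum_fiberCard hg (s := Finset.Iic i)
    (by simpa using isLowerSet_Iic i) x
  simp only [hfib, ← blockOffset_add_self, Finset.mem_Iio, Finset.mem_Iic] at hlt hle
  rw [← blockOffset] at hlt
  exact le_antisymm (hle.mpr h₂) (not_lt.mp fun h => absurd (hlt.mp h) (not_lt.mpr h₁))

end BlockOffsets

section BraidShift

lemma braidGen_braid {m : ℕ} {a b : Fin (m - 1)} (h : (b : ℕ) = a + 1) :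
    braidGen m a * braidGen m b * braidGen m a = braidGen m b * braidGen m a * braidGen m b :=
  PresentedGroup.mk_eq_mk_of_mul_inv_mem (Or.inl ⟨a, b, h, rfl⟩)

lemma braidGen_commute {m : ℕ} {a b : Fin (m - 1)}
    (h : (a : ℕ) + 2 ≤ b ∨ (b : ℕ) + 2 ≤ a) : Commute (braidGen m a) (braidGen m b) :=
  PresentedGroup.mk_eq_mk_of_mul_inv_mem (Or.inr ⟨a, b, h, rfl⟩)

variable {k m : ℕ} (o : ℕ) (h : o + k ≤ m)

def shiftGenIndex (a : Fin (k - 1)) : Fin (m - 1) :=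
  ⟨o + a, by have := a.isLt; omega⟩

/-- `B_k` acting on the strands `o, …, o + k - 1` of `B_m`. -/
def braidShift : BraidGroup k →* BraidGroup m :=
  PresentedGroup.toGroup (f := fun a => braidGen m (shiftGenIndex o h a)) <| by
    rintro r (⟨a, b, hab, rfl⟩ | ⟨a, b, hab, rfl⟩) <;>
      simp only [map_mul, map_inv, FreeGroup.lift_apply_of, mul_inv_eq_one]
    · exact braidGen_braid (by simp only [shiftGenIndex, hab]; omega)
    · exact (braidGen_commute (by simp only [shiftGenIndex]; omega)).eq

@[simp]
lemma braidShift_braidGen (a : Fin (k - 1)) :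
    braidShift o h (braidGen k a) = braidGen m (shiftGenIndex o h a) :=
  PresentedGroup.toGroup.of _

lemma braidShift_commute {k' o' : ℕ} (h' : o' + k' ≤ m) (hoo' : o + k ≤ o')
    (x : BraidGroup k) (y : BraidGroup k') :
    Commute (braidShift o h x) (braidShift o' h' y) := by
  refine PresentedGroup.commute_of_forall_of _ (fun a => ?_) x
  refine (PresentedGroup.commute_of_forall_of _ (fun b => ?_) y).symm
  have := a.isLt
  exact braidGen_commute (Or.inr (by simp only [shiftGenIndex]; omega))

def shiftEmbedding : Fin k ↪ Fin m :=
  ⟨fun c => ⟨o + c, by omega⟩, fun c c' hc => Fin.ext (by simpa using hc)⟩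

lemma braidSwap_viaEmbedding (a : Fin (k - 1)) :
    (braidSwap k a).viaEmbedding (shiftEmbedding o h) = braidSwap m (shiftGenIndex o h a) := by
  rw [braidSwap, Equiv.Perm.viaEmbedding_swap]
  rfl

lemma apply_braidShift {q : BraidGroup m →* Equiv.Perm (Fin m)}
    (hq : ∀ a, q (braidGen m a) = braidSwap m a) {q' : BraidGroup k →* Equiv.Perm (Fin k)}
    (hq' : ∀ a, q' (braidGen k a) = braidSwap k a) (x : BraidGroup k) :
    q (braidShift o h x) = (q' x).viaEmbedding (shiftEmbedding o h) := by
  have hcomp : q.comp (braidShift o h) =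
      (Equiv.Perm.viaEmbeddingHom (shiftEmbedding o h)).comp q' :=
    PresentedGroup.ext fun a => by
      change q (braidShift o h (braidGen k a)) = (q' (braidGen k a)).viaEmbedding _
      rw [braidShift_braidGen, hq, hq', braidSwap_viaEmbedding]
  exact DFunLike.congr_fun hcomp x

end BraidShift

section BlockBraidHom

variable {n : ℕ} (p : Fin n → ℕ)

lemma braidShift_blockOffset_commute : Pairwise fun i j => ∀ x y,
    Commute (braidShift (blockOffset p i) (blockOffset_add_self_le_sum p i) x)
      (braidShift (blockOffset p j) (blockOffset_add_self_le_sum p j) y) := by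
  intro i j hij x y
  rcases hij.lt_or_gt with hlt | hlt
  · exact braidShift_commute _ _ _ (blockOffset_add_self_le_of_lt p hlt) x y
  · exact (braidShift_commute _ _ _ (blockOffset_add_self_le_of_lt p hlt) y x).symm

/-- The block homomorphism `ι_p`. -/
def blockBraidHom : (∀ i, BraidGroup (p i)) →* BraidGroup (∑ i, p i) :=
  MonoidHom.noncommPiCoprod _ (braidShift_blockOffset_commute p)

lemma blockBraidHom_mulSingle (i : Fin n) (x : BraidGroup (p i)) :
    blockBraidHom p (Pi.mulSingle i x) =
      braidShift (blockOffset p i) (blockOffset_add_self_le_sum p i) x :=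
  MonoidHom.noncommPiCoprod_mulSingle (fun i => braidShift (blockOffset p i) _) i x

lemma blockBraidHom_mem {S : Submonoid (BraidGroup (∑ i, p i))} {β : ∀ i, BraidGroup (p i)}
    (h : ∀ i, braidShift (blockOffset p i) (blockOffset_add_self_le_sum p i) (β i) ∈ S) :
    blockBraidHom p β ∈ S :=
  MonoidHom.noncommPiCoprod_mem h

lemma apply_shiftEmbedding_blockOffset {m : ℕ} {g : Fin m → Fin n} (hg : Monotone g)
    (hfib : ∀ i, fiberCard g i = p i) (i : Fin n) (h : blockOffset p i + p i ≤ m)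
    (c : Fin (p i)) : g (shiftEmbedding (blockOffset p i) h c) = i :=
  eq_of_blockOffset_le_of_lt p hg hfib (Nat.le_add_right _ _) (Nat.add_lt_add_left c.isLt _)

end BlockBraidHom

/-- Let `p : Fin n → ℕ` with `∑ i, p i = m`, let `g = g_p` be the unique monotone function
`Fin m → Fin n` whose fiber at `i` has cardinality `p i`, let `q : B_m →* Equiv.Perm (Fin m)`
be the underlying-permutation homomorphism (characterized on the Artin generators), and
similarly `qfam i : B_{p i} →* Equiv.Perm (Fin (p i))` for each factor.  There is a group
homomorphism `ι_p : (∏_{i : Fin n} B_{p i}) →* B_m` sending the `k`-th Artin generator of the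
`i`-th factor to the `(∑_{j<i} p j + k)`-th Artin generator of `B_m`.  Moreover, for every `β`
in the product, the underlying permutation `q (ι_p β)` lies in `Stab(g_p)` (it preserves each
block of `Fin m` setwise); in particular `ι_p` maps `∏_i PB_{p i}` into the pure braid group
`PB_m`, the kernels being the pure braid groups. -/
theorem stmt_15 (n m : ℕ) (p : Fin n → ℕ) (hp : ∑ i, p i = m)
    (g : Fin m → Fin n) (hg : Monotone g) (hfib : ∀ i, fiberCard g i = p i)
    (q : BraidGroup m →* Equiv.Perm (Fin m)) (hq : ∀ k, q (braidGen m k) = braidSwap m k)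
    (qfam : ∀ i : Fin n, BraidGroup (p i) →* Equiv.Perm (Fin (p i)))
    (hqfam : ∀ (i : Fin n) (k : Fin (p i - 1)), qfam i (braidGen (p i) k) = braidSwap (p i) k) :
    ∃ ι : (∀ i : Fin n, BraidGroup (p i)) →* BraidGroup m,
      (∀ (i : Fin n) (k : Fin (p i - 1)) (k' : Fin (m - 1)),
          (k' : ℕ) = (∑ j ∈ Finset.univ.filter fun j => j < i, p j) + (k : ℕ) →
          ι (Pi.mulSingle i (braidGen (p i) k)) = braidGen m k') ∧
      (∀ β : ∀ i : Fin n, BraidGroup (p i), g ∘ ⇑(q (ι β)) = g) ∧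
      (∀ β : ∀ i : Fin n, BraidGroup (p i),
          (∀ i, β i ∈ (qfam i).ker) → ι β ∈ q.ker) := by
  subst hp
  have hq_shift i :=
    apply_braidShift (blockOffset p i) (blockOffset_add_self_le_sum p i) hq (hqfam i)
  refine ⟨blockBraidHom p, fun i k k' hk' => ?_, fun β => ?_, fun β hβ => ?_⟩
  · rw [blockBraidHom_mulSingle, braidShift_braidGen]
    congr 1
    ext
    simp [shiftGenIndex, blockOffset, hk', Finset.filter_gt_eq_Iio]
  · refine Equiv.Perm.mem_fiberStabilizer.mp
      (blockBraidHom_mem p (S := ((Equiv.Perm.fiberStabilizer g).comap q).toSubmonoid)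
        fun i => ?_)
    change g ∘ q _ = g
    rw [hq_shift]
    refine Equiv.Perm.comp_viaEmbedding_eq_self (fun c c' => ?_) _
    rw [apply_shiftEmbedding_blockOffset p hg hfib, apply_shiftEmbedding_blockOffset p hg hfib]
  · refine blockBraidHom_mem p (S := q.ker.toSubmonoid) fun i => ?_
    change q _ = 1
    rw [hq_shift, (qfam i).mem_ker.mp (hβ i), ← Equiv.Perm.viaEmbeddingHom_apply, map_one]
end

section
/- The following data form a category: objects are the natural numbers; a morphism m → n is a pair (s, g) of a permutation s of Fin m and a monotone function g : Fin m → Fin n; the identity on m is (id, id); and the composite of (s₁, g₁) : m → n with (s₂, g₂) : n → o is ((s₂)^{g₁} ∘ s₁, g₂ ∘ (g₁)_{s₂}), using the distributive-law notation. That is, this composition is associative and unital. Moreover, the assignment (s, g) ↦ g ∘ s : Fin m → Fin n is compatible with these compositions and identities, i.e. it defines a functor from this category to the category whose objects are natural numbers and whose morphisms m → n are all functions Fin m → Fin n. -/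
/-- A morphism `m → n` of the category `SΔ`: a pair `(s, g)` of a permutation `s` of `Fin m`
and a monotone function `g : Fin m → Fin n`. -/
def SDMor (m n : ℕ) : Type :=
  Equiv.Perm (Fin m) × {g : Fin m → Fin n // Monotone g}

/-- The type of a distributive law: to each monotone `f : Fin m → Fin n` and permutation `s` of
`Fin n` it assigns the pair `(f_s, s^f)`. -/
def DistLaw : Type :=
  ∀ {m n : ℕ} (f : Fin m → Fin n), Monotone f → Equiv.Perm (Fin n) →
    (Fin m → Fin n) × Equiv.Perm (Fin m)

/-- The defining property of the distributive law: `f_s` is monotone, `s^f` is increasing on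
the fibers of `f`, and `s ∘ f = f_s ∘ s^f`. -/
def IsDistLaw (D : DistLaw) : Prop :=
  ∀ {m n : ℕ} (f : Fin m → Fin n) (hf : Monotone f) (s : Equiv.Perm (Fin n)),
    Monotone (D f hf s).1 ∧ IncreasingOnFibers (D f hf s).2 f ∧
      ⇑s ∘ f = (D f hf s).1 ∘ ⇑(D f hf s).2

/-- The identity morphism `(id, id)` of `SΔ` on `m`. -/
def SDid (m : ℕ) : SDMor m m := ⟨1, ⟨id, monotone_id⟩⟩

/-- The composite of `(s₁, g₁) : m → n` with `(s₂, g₂) : n → o` in `SΔ`, defined through the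
distributive law: `((s₂)^{g₁} ∘ s₁, g₂ ∘ (g₁)_{s₂})`. -/
def SDcomp (D : DistLaw) (hD : IsDistLaw D) {m n o : ℕ} (a : SDMor m n) (b : SDMor n o) :
    SDMor m o :=
  ⟨(D a.2.1 a.2.2 b.1).2 * a.1,
    ⟨b.2.1 ∘ (D a.2.1 a.2.2 b.1).1, b.2.2.comp (hD a.2.1 a.2.2 b.1).1⟩⟩

/-- The underlying function `Fin m → Fin n` of a morphism `(s, g)` of `SΔ`, namely `g ∘ s`. -/
def SDreal {m n : ℕ} (a : SDMor m n) : Fin m → Fin n := a.2.1 ∘ ⇑a.1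

/-!
The distributive law is unique: if `s ∘ f = G ∘ T` with `G` monotone and `T` increasing on the
fibers of `f`, then `T⁻¹` is the stable sorting permutation `Tuple.sort (s ∘ f)` and
`G = s ∘ f ∘ T⁻¹`. Uniqueness reduces the two compatibility laws
`(f_{ts}, (ts)^f) = ((f_s)_t, t^{f_s} s^f)` and `((h ∘ f)_s, s^{h ∘ f}) = (h_s ∘ f_{s^h}, (s^h)^f)`
to checking that the right-hand sides are monotone, increasing on fibers and satisfy the
commutation relation. Associativity is a rewrite with these two laws, the unit laws follow from
`id_s = s`, `s^{id} = s`, `f_1 = f`, `1^f = 1`, and functoriality is `s ∘ f = f_s ∘ s^f`.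
-/

theorem IncreasingOnFibers.symm_eq_sort {m n : ℕ} {f : Fin m → Fin n} {s : Equiv.Perm (Fin n)}
    {G : Fin m → Fin n} {T : Equiv.Perm (Fin m)} (hT : IncreasingOnFibers T f)
    (hG : Monotone G) (hc : ⇑s ∘ f = G ∘ ⇑T) : T.symm = Tuple.sort (⇑s ∘ f) := by
  have hG' : G = (⇑s ∘ f) ∘ ⇑T.symm := ((Equiv.comp_symm_eq T _ _).mpr hc).symm
  refine Tuple.eq_sort_iff.mpr ⟨hG' ▸ hG, fun i j hij hfij => ?_⟩
  have hfib : f (T.symm j) = f (T.symm i) := (s.injective hfij).symm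
  refine lt_of_le_of_ne (not_lt.mp fun hji => ?_) (T.symm.injective.ne hij.ne)
  have := hT _ _ hfib hji
  rw [Equiv.apply_symm_apply, Equiv.apply_symm_apply] at this
  exact this.not_gt hij

theorem SDMor.ext {m n : ℕ} {a b : SDMor m n} (h₁ : a.1 = b.1) (h₂ : a.2.1 = b.2.1) : a = b :=
  Prod.ext h₁ (Subtype.ext h₂)

namespace IsDistLaw

variable {D : DistLaw}

theorem monotone (hD : IsDistLaw D) {m n : ℕ} {f : Fin m → Fin n} (hf : Monotone f)
    (s : Equiv.Perm (Fin n)) : Monotone (D f hf s).1 :=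
  (hD f hf s).1

theorem increasingOnFibers (hD : IsDistLaw D) {m n : ℕ} {f : Fin m → Fin n} (hf : Monotone f)
    (s : Equiv.Perm (Fin n)) : IncreasingOnFibers (D f hf s).2 f :=
  (hD f hf s).2.1

theorem comp_eq (hD : IsDistLaw D) {m n : ℕ} {f : Fin m → Fin n} (hf : Monotone f)
    (s : Equiv.Perm (Fin n)) : ⇑s ∘ f = (D f hf s).1 ∘ ⇑(D f hf s).2 :=
  (hD f hf s).2.2

theorem apply_apply (hD : IsDistLaw D) {m n : ℕ} {f : Fin m → Fin n} (hf : Monotone f)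
    (s : Equiv.Perm (Fin n)) (x : Fin m) : s (f x) = (D f hf s).1 ((D f hf s).2 x) :=
  congrFun (hD.comp_eq hf s) x

theorem apply_eq_of_comp_eq (hD : IsDistLaw D) {m n : ℕ} {f : Fin m → Fin n} (hf : Monotone f)
    {s : Equiv.Perm (Fin n)} {G : Fin m → Fin n} {T : Equiv.Perm (Fin m)} (hG : Monotone G)
    (hT : IncreasingOnFibers T f)
    (hc : ⇑s ∘ f = G ∘ ⇑T) : D f hf s = (G, T) := by
  have hT' : (D f hf s).2 = T := Equiv.symm_bijective.injective <|
    ((hD.increasingOnFibers hf s).symm_eq_sort (hD.monotone hf s) (hD.comp_eq hf s)).trans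
      (hT.symm_eq_sort hG hc).symm
  refine Prod.ext ?_ hT'
  have h := hD.comp_eq hf s
  rw [hT', hc] at h
  exact T.surjective.injective_comp_right h.symm

theorem apply_id (hD : IsDistLaw D) {m : ℕ} (s : Equiv.Perm (Fin m)) :
    D id monotone_id s = (id, s) :=
  hD.apply_eq_of_comp_eq monotone_id monotone_id (fun _ _ hxy hlt => absurd hxy hlt.ne) rfl

theorem apply_one (hD : IsDistLaw D) {m n : ℕ} {f : Fin m → Fin n} (hf : Monotone f) :
    D f hf 1 = (f, 1) :=
  hD.apply_eq_of_comp_eq hf hf (fun _ _ _ hlt => hlt) rfl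

theorem apply_mul (hD : IsDistLaw D) {m n : ℕ} {f : Fin m → Fin n} (hf : Monotone f)
    (t s : Equiv.Perm (Fin n)) :
    D f hf (t * s) = ((D (D f hf s).1 (hD.monotone hf s) t).1,
      (D (D f hf s).1 (hD.monotone hf s) t).2 * (D f hf s).2) := by
  refine hD.apply_eq_of_comp_eq hf (hD.monotone _ t) (fun x y hxy hlt => ?_) ?_
  · refine hD.increasingOnFibers _ t _ _ ?_ (hD.increasingOnFibers hf s x y hxy hlt)
    rw [← hD.apply_apply, ← hD.apply_apply, hxy]
  · funext x
    simp only [Function.comp_apply, Equiv.Perm.mul_apply]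
    rw [hD.apply_apply hf s, hD.apply_apply _ t]

theorem apply_comp (hD : IsDistLaw D) {m n o : ℕ} {f : Fin m → Fin n} (hf : Monotone f)
    {h : Fin n → Fin o} (hh : Monotone h) (s : Equiv.Perm (Fin o)) :
    D (h ∘ f) (hh.comp hf) s = ((D h hh s).1 ∘ (D f hf (D h hh s).2).1,
      (D f hf (D h hh s).2).2) := by
  refine hD.apply_eq_of_comp_eq (hh.comp hf) ((hD.monotone hh s).comp (hD.monotone hf _))
    (fun x y hxy hlt => ?_) ?_
  · rcases (hf hlt.le).eq_or_lt with hfxy | hfxy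
    · exact hD.increasingOnFibers hf _ x y hfxy hlt
    · apply (hD.monotone hf _).reflect_lt
      rw [← hD.apply_apply, ← hD.apply_apply]
      exact hD.increasingOnFibers hh s _ _ hxy hfxy
  · funext x
    simp only [Function.comp_apply]
    rw [hD.apply_apply hh s, hD.apply_apply hf]

end IsDistLaw

/-- Objects the natural numbers, morphisms `m → n` the pairs `(s, g)` of a permutation `s` of
`Fin m` and a monotone `g : Fin m → Fin n`, identity `(id, id)`, and composition defined via
the distributive law as `((s₂)^{g₁} ∘ s₁, g₂ ∘ (g₁)_{s₂})`, form a category: composition is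
associative and unital.  Moreover `(s, g) ↦ g ∘ s` is compatible with composition and
identities, i.e. it defines a functor to the category of the natural numbers with all
functions `Fin m → Fin n` as morphisms. -/
theorem stmt_16 (D : DistLaw) (hD : IsDistLaw D) :
    (∀ (m n o q : ℕ) (a : SDMor m n) (b : SDMor n o) (c : SDMor o q),
        SDcomp D hD (SDcomp D hD a b) c = SDcomp D hD a (SDcomp D hD b c)) ∧
    (∀ (m n : ℕ) (a : SDMor m n), SDcomp D hD (SDid m) a = a ∧ SDcomp D hD a (SDid n) = a) ∧
    (∀ (m n o : ℕ) (a : SDMor m n) (b : SDMor n o),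
        SDreal (SDcomp D hD a b) = SDreal b ∘ SDreal a) ∧
    (∀ m : ℕ, SDreal (SDid m) = id) := by
  refine ⟨?assoc, fun m n a => ⟨?id_comp, ?comp_id⟩, ?real_comp, fun m => rfl⟩
  case assoc =>
    rintro m n o q ⟨s₁, g₁, hg₁⟩ ⟨s₂, g₂, hg₂⟩ c
    refine SDMor.ext ?_ ?_ <;>
      simp only [SDcomp, hD.apply_comp (hD.monotone hg₁ s₂) hg₂, hD.apply_mul, mul_assoc,
        Function.comp_assoc]
  case id_comp =>
    refine SDMor.ext ?_ ?_ <;> simp [SDcomp, SDid, hD.apply_id]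
  case comp_id =>
    refine SDMor.ext ?_ ?_ <;> simp [SDcomp, SDid, hD.apply_one]
  case real_comp =>
    rintro m n o ⟨s₁, g₁, hg₁⟩ b
    funext x
    simp [SDreal, SDcomp, hD.apply_apply hg₁ b.1]
end
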